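/- Let A and B be finite dimensional algebras over an algebraically closed field K. If M∈mod A and N∈mod B are reflexive modules (i.e., the natural evaluation maps M → M** and N → N** are isomorphisms, where (−)* = Hom into the regular module), then M⊗_K N is a reflexive (A⊗_K B)-module: the evaluation map M⊗N → (M⊗N)** is an isomorphism. (Step (3) of the proof of Proposition 3.1) -/

import Mathlib

/-!
Common definitions: modules over a finite dimensional algebra.

Following the conventions of the paper, "module" below means (finitely generated, when
so indicated) module; we work with left modules throughout (for an algebra `A`, the
category of right `A`-modules is equivalent to that of left `Aᵐᵒᵖ`-modules, so this is
only a change of convention).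
-/

open Function LinearMap TensorProduct

universe u

section Defs

variable (R : Type u) [Ring R]

/-- A submodule `N ≤ M` is superfluous (small) in `M` if `N ⊔ N' = ⊤` implies `N' = ⊤`. -/
def IsSuperfluousSubmodule {M : Type u} [AddCommGroup M] [Module R M]
    (N : Submodule R M) : Prop :=
  ∀ N' : Submodule R M, N ⊔ N' = ⊤ → N' = ⊤

/-- `M` is a Gorenstein projective `R`-module: there is a doubly infinite exact complex
`⋯ → P₋₁ → P₀ → P₁ → ⋯` of finitely generated projective `R`-modules which stays exact
after applying `Hom_R(-, R)`, such that `M ≅ Im (P₋₁ → P₀)`. -/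
def IsGorensteinProj (M : Type u) [AddCommGroup M] [Module R M] : Prop :=
  ∃ (P : ℤ → ModuleCat.{u} R) (d : ∀ i : ℤ, P i →ₗ[R] P (i + 1)),
    (∀ i, Module.Finite R (P i)) ∧ (∀ i, Module.Projective R (P i)) ∧
    (∀ i, Function.Exact (d i) (d (i + 1))) ∧
    (∀ i, Function.Exact
      (fun g : P (i + 1 + 1) →ₗ[R] R => g ∘ₗ d (i + 1))
      (fun g : P (i + 1) →ₗ[R] R => g ∘ₗ d i)) ∧
    Nonempty (M ≃ₗ[R] LinearMap.range (d (-1)))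

/-- `P₁ --f--> P₀ --g--> M → 0` is a minimal projective presentation of `M`:
`P₀ --g--> M` and `P₁ --f--> ker g` are projective covers. -/
def IsMinimalProjPresentation {M : Type u} [AddCommGroup M] [Module R M]
    {P₁ P₀ : ModuleCat.{u} R} (f : P₁ →ₗ[R] P₀) (g : P₀ →ₗ[R] M) : Prop :=
  Module.Finite R P₁ ∧ Module.Finite R P₀ ∧
  Module.Projective R P₁ ∧ Module.Projective R P₀ ∧
  Function.Surjective g ∧ IsSuperfluousSubmodule R (LinearMap.ker g) ∧
  LinearMap.range f = LinearMap.ker g ∧ IsSuperfluousSubmodule R (LinearMap.ker f)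

/-- `M` is τ-rigid: for a minimal projective presentation `P₁ --f--> P₀ → M → 0`,
the induced map `Hom(f, M) : Hom(P₀, M) → Hom(P₁, M)`, `k ↦ k ∘ f`, is surjective
(equivalently, `Hom_R(M, τM) = 0`). -/
def IsTauRigid (M : Type u) [AddCommGroup M] [Module R M] : Prop :=
  ∀ (P₁ P₀ : ModuleCat.{u} R) (f : P₁ →ₗ[R] P₀) (g : P₀ →ₗ[R] M),
    IsMinimalProjPresentation R f g →
      Function.Surjective (fun k : P₀ →ₗ[R] M => k ∘ₗ f)

/-- A nonzero module is indecomposable if it is not the direct sum of two nonzero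
submodules. -/
def IsIndecomposable (M : Type u) [AddCommGroup M] [Module R M] : Prop :=
  Nontrivial M ∧ ∀ N N' : Submodule R M, IsCompl N N' → N = ⊥ ∨ N' = ⊥

/-- `|M| = n`: `M` has exactly `n` pairwise non-isomorphic indecomposable direct
summands. -/
def HasIndecSummandCount (M : Type u) [AddCommGroup M] [Module R M] (n : ℕ) : Prop :=
  ∃ X : Fin n → Submodule R M,
    (∀ i, (∃ Y, IsCompl (X i) Y) ∧ IsIndecomposable R (X i)) ∧
    (∀ i j, i ≠ j → IsEmpty ((X i) ≃ₗ[R] (X j))) ∧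
    (∀ N : Submodule R M, (∃ Y, IsCompl N Y) → IsIndecomposable R N →
      ∃ i, Nonempty ((N : Type u) ≃ₗ[R] (X i : Type u)))

/-- `M` is τ-tilting if it is τ-rigid and `|M| = |R|`. -/
def IsTauTilting (M : Type u) [AddCommGroup M] [Module R M] : Prop :=
  IsTauRigid R M ∧ ∃ n : ℕ, HasIndecSummandCount R M n ∧ HasIndecSummandCount R R n

/-- The two-sided ideal generated by `x` in `R`, as a set: all finite sums
`∑ aᵢ * x * bᵢ`. -/
def twoSidedGen (x : R) : Set R :=
  {y | ∃ (n : ℕ) (a b : Fin n → R), y = ∑ i, a i * x * b i}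

/-- A witness that `M` is a support τ-tilting `R`-module: an idempotent `e ∈ R` and the
quotient `S = R/(e)` of `R` by the two-sided ideal generated by `e` (realized as a
surjective ring homomorphism `π : R → S` whose kernel is `(e)`), such that `M`, with an
`S`-module structure compatible with its `R`-module structure, is a τ-tilting
`S`-module. -/
structure SupportTauTiltingWitness (M : Type u) [AddCommGroup M] [Module R M] :
    Type (u + 1) where
  S : Type u
  [ringS : Ring S]
  π : R →+* S
  e : R
  idem : IsIdempotentElem e
  surj : Function.Surjective π
  ker_eq : ∀ x : R, π x = 0 ↔ x ∈ twoSidedGen R e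
  [modS : Module S M]
  compat : ∀ (r : R) (m : M), π r • m = r • m
  tauTilting : IsTauTilting S M

/-- `M` is a support τ-tilting `R`-module: there is an idempotent `e` of `R` such that
`M` is a τ-tilting `R/(e)`-module. -/
def IsSupportTauTilting (M : Type u) [AddCommGroup M] [Module R M] : Prop :=
  Nonempty (SupportTauTiltingWitness R M)

/-- `P• --ε--> M → 0` is a projective resolution of `M`. -/
def IsProjectiveResolution (M : Type u) [AddCommGroup M] [Module R M]
    (P : ℕ → ModuleCat.{u} R) (d : ∀ n : ℕ, P (n + 1) →ₗ[R] P n) (ε : P 0 →ₗ[R] M) :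
    Prop :=
  (∀ n, Module.Projective R (P n)) ∧ Function.Surjective ε ∧ Function.Exact (d 0) ε ∧
    ∀ n, Function.Exact (d (n + 1)) (d n)

/-- `M` is semi-Gorenstein projective, i.e. `Ext^i_R(M, R) = 0` for all `i ≥ 1`:
for a projective resolution `P•` of `M`, the complex
`Hom(P₀, R) → Hom(P₁, R) → ⋯` is exact at every position `≥ 1`. -/
def IsSemiGorensteinProj (M : Type u) [AddCommGroup M] [Module R M] : Prop :=
  ∀ (P : ℕ → ModuleCat.{u} R) (d : ∀ n : ℕ, P (n + 1) →ₗ[R] P n) (ε : P 0 →ₗ[R] M),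
    IsProjectiveResolution R M P d ε →
    ∀ n, Function.Exact (fun g : P n →ₗ[R] R => g ∘ₗ d n)
      (fun g : P (n + 1) →ₗ[R] R => g ∘ₗ d (n + 1))

/-- `M` has finite projective dimension: it has a projective resolution which
eventually vanishes. -/
def HasFiniteProjectiveDimension (M : Type u) [AddCommGroup M] [Module R M] : Prop :=
  ∃ (P : ℕ → ModuleCat.{u} R) (d : ∀ n : ℕ, P (n + 1) →ₗ[R] P n) (ε : P 0 →ₗ[R] M),
    IsProjectiveResolution R M P d ε ∧ ∃ N : ℕ, ∀ n, N ≤ n → Subsingleton (P n)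

/-- `M` has finite injective dimension: there is an exact coresolution
`0 → M → I⁰ → I¹ → ⋯` by injective modules which eventually vanishes. -/
def HasFiniteInjectiveDimension (M : Type u) [AddCommGroup M] [Module R M] : Prop :=
  ∃ (I : ℕ → ModuleCat.{u} R) (d : ∀ n : ℕ, I n →ₗ[R] I (n + 1)) (ε : M →ₗ[R] I 0),
    (∀ n, Module.Injective R (I n)) ∧ Function.Injective ε ∧ Function.Exact ε (d 0) ∧
    (∀ n, Function.Exact (d n) (d (n + 1))) ∧ ∃ N : ℕ, ∀ n, N ≤ n → Subsingleton (I n)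

/-- `R` is CM-finite: there are only finitely many isomorphism classes of
indecomposable finitely generated Gorenstein projective `R`-modules. -/
def IsCMFinite : Prop :=
  ∃ (n : ℕ) (X : Fin n → ModuleCat.{u} R),
    ∀ M : ModuleCat.{u} R, Module.Finite R M → IsIndecomposable R M →
      IsGorensteinProj R M → ∃ i, Nonempty (M ≃ₗ[R] X i)

/-- `R` is τ-tilting finite: there are only finitely many isomorphism classes of
indecomposable finitely generated τ-rigid `R`-modules. -/
def IsTauTiltingFinite : Prop :=
  ∃ (n : ℕ) (X : Fin n → ModuleCat.{u} R),
    ∀ M : ModuleCat.{u} R, Module.Finite R M → IsIndecomposable R M →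
      IsTauRigid R M → ∃ i, Nonempty (M ≃ₗ[R] X i)

/-- `R` is CM-τ-tilting finite: there are only finitely many isomorphism classes of
indecomposable finitely generated `R`-modules which are both Gorenstein projective and
τ-rigid. -/
def IsCMTauTiltingFinite : Prop :=
  ∃ (n : ℕ) (X : Fin n → ModuleCat.{u} R),
    ∀ M : ModuleCat.{u} R, Module.Finite R M → IsIndecomposable R M →
      IsGorensteinProj R M → IsTauRigid R M → ∃ i, Nonempty (M ≃ₗ[R] X i)

end Defs

section Dual

variable (R : Type u) [Ring R] (M : Type u) [AddCommGroup M] [Module R M]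

/-- The `R`-dual `M* = Hom_R(M, R)` of a (left) `R`-module `M` is a right `R`-module,
i.e. a module over `Rᵐᵒᵖ`; `M** = Hom_{Rᵐᵒᵖ}(M*, R)` is again a (left) `R`-module, and
the evaluation map `M → M**`, `m ↦ (φ ↦ φ m)`, is `R`-linear. -/
def dualEval : M →ₗ[R] ((M →ₗ[R] R) →ₗ[Rᵐᵒᵖ] R) where
  toFun m :=
    { toFun := fun φ => φ m
      map_add' := fun _ _ => rfl
      map_smul' := fun _ _ => rfl }
  map_add' m m' := LinearMap.ext fun φ => φ.map_add m m'
  map_smul' r m := LinearMap.ext fun φ => φ.map_smul r m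

end Dual

section TensorModule

variable (K : Type u) [CommRing K]
variable (A : Type u) [Ring A] [Algebra K A]
variable (B : Type u) [Ring B] [Algebra K B]
variable (M : Type u) [AddCommGroup M] [Module K M] [Module A M] [IsScalarTower K A M]
variable (N : Type u) [AddCommGroup N] [Module K N] [Module B N] [IsScalarTower K B N]

/-- The action of `B` on `M ⊗[K] N` through the right factor, as an algebra morphism
into the `K`-linear endomorphisms. -/
noncomputable def rightFactorAction : B →ₐ[K] Module.End K (M ⊗[K] N) where
  toFun b := LinearMap.lTensor M ((Algebra.lsmul K K N) b)
  map_one' := by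
    show LinearMap.lTensor M ((Algebra.lsmul K K N) 1) = _
    rw [map_one]
    exact LinearMap.lTensor_id M N
  map_mul' b b' := by
    show LinearMap.lTensor M ((Algebra.lsmul K K N) (b * b')) = _
    rw [map_mul]
    exact LinearMap.lTensor_comp M _ _
  map_zero' := by
    show LinearMap.lTensor M ((Algebra.lsmul K K N) 0) = 0
    rw [map_zero]
    ext m n
    simp
  map_add' b b' := by
    show LinearMap.lTensor M ((Algebra.lsmul K K N) (b + b')) = _
    rw [map_add]
    ext m n
    simp
  commutes' k := by
    ext m n
    show (m ⊗ₜ[K] ((algebraMap K B) k • n)) = _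
    rw [algebraMap_smul]
    simp [Module.algebraMap_end_apply, smul_tmul]

/-- The action of `A ⊗[K] B` on `M ⊗[K] N`, where `A` acts on the left factor and `B`
acts on the right factor, as an algebra morphism into `K`-linear endomorphisms. -/
noncomputable def tensorAction : (A ⊗[K] B) →ₐ[K] Module.End K (M ⊗[K] N) :=
  Algebra.TensorProduct.lift
    (Algebra.lsmul K K (M ⊗[K] N))
    (rightFactorAction K B M N)
    (by
      intro a b
      apply TensorProduct.ext'
      intro m n
      rw [Module.End.mul_apply, Module.End.mul_apply]
      show a • (m ⊗ₜ[K] (b • n)) = _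
      rw [TensorProduct.smul_tmul']
      rfl)

/-- The canonical `A ⊗[K] B`-module structure on `M ⊗[K] N` for an `A`-module `M` and a
`B`-module `N`; on pure tensors, `(a ⊗ b) • (m ⊗ n) = (a • m) ⊗ (b • n)`. -/
noncomputable def tensorModule : Module (A ⊗[K] B) (M ⊗[K] N) :=
  Module.compHom (M ⊗[K] N) (tensorAction K A B M N).toRingHom

end TensorModule

section Triangular

/-- The lower triangular `n × n` matrix algebra `T_n(A)` over `A`, as a subalgebra of
the full matrix algebra. -/
def Tn (K : Type u) [CommRing K] (A : Type u) [Ring A] [Algebra K A] (n : ℕ) :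
    Subalgebra K (Matrix (Fin n) (Fin n) A) where
  carrier := {M | ∀ i j : Fin n, i < j → M i j = 0}
  mul_mem' := by
    intro M N hM hN i j hij
    rw [Matrix.mul_apply]
    refine Finset.sum_eq_zero fun k _ => ?_
    rcases lt_or_ge i k with h | h
    · rw [hM i k h, zero_mul]
    · rw [hN k j (lt_of_le_of_lt h hij), mul_zero]
  add_mem' := by
    intro M N hM hN i j hij
    simp [Matrix.add_apply, hM i j hij, hN i j hij]
  one_mem' := fun i j hij => Matrix.one_apply_ne (ne_of_lt hij)
  zero_mem' := fun i j hij => rfl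
  algebraMap_mem' := by
    intro k i j hij
    rw [Matrix.algebraMap_matrix_apply, if_neg (ne_of_lt hij)]

theorem Tn_apply_eq_zero {K : Type u} [CommRing K] {A : Type u} [Ring A] [Algebra K A]
    {n : ℕ} (m : Tn K A n) {i j : Fin n} (h : i < j) :
    (m : Matrix (Fin n) (Fin n) A) i j = 0 := m.2 i j h

/-- The `T₂(A)`-module associated to a triple `(X, Y, f)` with `X`, `Y` `A`-modules and
`f : X →ₗ[A] Y`: the underlying group is `X × Y`, and a lower triangular matrix
`((a, 0), (c, d))` acts by `(x, y) ↦ (a • x, c • f x + d • y)`. -/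
noncomputable def T2Module (K : Type u) [CommRing K] (A : Type u) [Ring A] [Algebra K A]
    {X Y : Type u} [AddCommGroup X] [Module A X] [AddCommGroup Y] [Module A Y]
    (f : X →ₗ[A] Y) : Module (Tn K A 2) (X × Y) :=
  letI : SMul (Tn K A 2) (X × Y) :=
    ⟨fun m v => (((m : Matrix (Fin 2) (Fin 2) A) 0 0) • v.1,
      ((m : Matrix (Fin 2) (Fin 2) A) 1 0) • f v.1 +
        ((m : Matrix (Fin 2) (Fin 2) A) 1 1) • v.2)⟩
  Module.ofMinimalAxioms
    (fun m v w => by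
      apply Prod.ext
      · rw [Prod.fst_add]
        show ((m : Matrix (Fin 2) (Fin 2) A) 0 0) • (v.1 + w.1) =
          ((m : Matrix (Fin 2) (Fin 2) A) 0 0) • v.1 +
            ((m : Matrix (Fin 2) (Fin 2) A) 0 0) • w.1
        rw [smul_add]
      · rw [Prod.snd_add]
        show ((m : Matrix (Fin 2) (Fin 2) A) 1 0) • f (v.1 + w.1) +
            ((m : Matrix (Fin 2) (Fin 2) A) 1 1) • (v.2 + w.2) =
          (((m : Matrix (Fin 2) (Fin 2) A) 1 0) • f v.1 +
              ((m : Matrix (Fin 2) (Fin 2) A) 1 1) • v.2) +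
            (((m : Matrix (Fin 2) (Fin 2) A) 1 0) • f w.1 +
              ((m : Matrix (Fin 2) (Fin 2) A) 1 1) • w.2)
        rw [map_add, smul_add, smul_add]
        abel)
    (fun m m' v => by
      apply Prod.ext
      · rw [Prod.fst_add]
        show ((↑(m + m') : Matrix (Fin 2) (Fin 2) A) 0 0) • v.1 =
          ((↑m : Matrix (Fin 2) (Fin 2) A) 0 0) • v.1 +
            ((↑m' : Matrix (Fin 2) (Fin 2) A) 0 0) • v.1
        rw [Subalgebra.coe_add, Matrix.add_apply, add_smul]
      · rw [Prod.snd_add]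
        show ((↑(m + m') : Matrix (Fin 2) (Fin 2) A) 1 0) • f v.1 +
            ((↑(m + m') : Matrix (Fin 2) (Fin 2) A) 1 1) • v.2 =
          (((↑m : Matrix (Fin 2) (Fin 2) A) 1 0) • f v.1 +
              ((↑m : Matrix (Fin 2) (Fin 2) A) 1 1) • v.2) +
            (((↑m' : Matrix (Fin 2) (Fin 2) A) 1 0) • f v.1 +
              ((↑m' : Matrix (Fin 2) (Fin 2) A) 1 1) • v.2)
        rw [Subalgebra.coe_add, Matrix.add_apply, Matrix.add_apply, add_smul, add_smul]
        abel)
    (fun m m' v => by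
      apply Prod.ext
      · show ((↑(m * m') : Matrix (Fin 2) (Fin 2) A) 0 0) • v.1 =
          ((↑m : Matrix (Fin 2) (Fin 2) A) 0 0) •
            (((↑m' : Matrix (Fin 2) (Fin 2) A) 0 0) • v.1)
        rw [Subalgebra.coe_mul, Matrix.mul_apply, Fin.sum_univ_two,
          Tn_apply_eq_zero m (show (0 : Fin 2) < 1 by decide), zero_mul, add_zero, mul_smul]
      · show ((↑(m * m') : Matrix (Fin 2) (Fin 2) A) 1 0) • f v.1 +
            ((↑(m * m') : Matrix (Fin 2) (Fin 2) A) 1 1) • v.2 =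
          ((↑m : Matrix (Fin 2) (Fin 2) A) 1 0) •
              f (((↑m' : Matrix (Fin 2) (Fin 2) A) 0 0) • v.1) +
            ((↑m : Matrix (Fin 2) (Fin 2) A) 1 1) •
              (((↑m' : Matrix (Fin 2) (Fin 2) A) 1 0) • f v.1 +
                ((↑m' : Matrix (Fin 2) (Fin 2) A) 1 1) • v.2)
        rw [Subalgebra.coe_mul, Matrix.mul_apply, Matrix.mul_apply, Fin.sum_univ_two,
          Fin.sum_univ_two, Tn_apply_eq_zero m' (show (0 : Fin 2) < 1 by decide), mul_zero,
          zero_add, map_smul, add_smul, mul_smul, mul_smul, mul_smul, smul_add]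
        abel)
    (fun v => by
      apply Prod.ext
      · show ((↑(1 : Tn K A 2) : Matrix (Fin 2) (Fin 2) A) 0 0) • v.1 = v.1
        rw [Subalgebra.coe_one, Matrix.one_apply_eq, one_smul]
      · show ((↑(1 : Tn K A 2) : Matrix (Fin 2) (Fin 2) A) 1 0) • f v.1 +
            ((↑(1 : Tn K A 2) : Matrix (Fin 2) (Fin 2) A) 1 1) • v.2 = v.2
        rw [Subalgebra.coe_one, Matrix.one_apply_ne (show (1 : Fin 2) ≠ 0 by decide),
          Matrix.one_apply_eq, zero_smul, one_smul, zero_add])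

end Triangular


/-!
The natural map `Φ : M* ⊗ N* → (M ⊗ N)*`, `f ⊗ g ↦ (m ⊗ n ↦ f m ⊗ g n)`, is bijective when
`A`, `B`, `M`, `N` are finite dimensional over `K`: it is injective because
`Hom_K(M, A) ⊗ Hom_K(N, B) ≅ Hom_K(M ⊗ N, A ⊗ B)`, and a preimage of `φ` is found by expanding
the values of `φ` along a basis of `A`, and then the resulting coefficients along a basis of `N*`.
Applying `Φ` a second time, to the `Aᵐᵒᵖ`- and `Bᵐᵒᵖ`-modules `M*` and `N*`, identifies
`(M ⊗ N)**` with `M** ⊗ N**` (up to `A ⊗ B ≅ Aᵐᵒᵖ ⊗ Bᵐᵒᵖ`), and under this identification the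
evaluation map of `M ⊗ N` is the tensor product of the evaluation maps of `M` and `N`.
-/

open Module

-- Low priority, so that `A ⊗[K] B` keeps its regular module structure over itself.
attribute [local instance 10] tensorModule

section Algebra

variable {K : Type u} [Field K]
variable {A : Type u} [Ring A] [Algebra K A] {B : Type u} [Ring B] [Algebra K B]

instance Module.Finite.linearMap_of_isScalarTower {R : Type u} [Ring R] [Algebra K R]
    {X Y : Type u} [AddCommGroup X] [Module K X] [Module R X] [IsScalarTower K R X]
    [AddCommGroup Y] [Module K Y] [Module R Y] [IsScalarTower K R Y]
    [Module.Finite K X] [Module.Finite K Y] : Module.Finite K (X →ₗ[R] Y) :=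
  Module.Finite.of_injective (restrictScalarsₗ K R X Y K) (restrictScalars_injective K)

theorem sum_tmul_equivFinsuppOfBasisLeft {ι : Type*} [Fintype ι] [DecidableEq ι]
    (bA : Basis ι K A) (z : A ⊗[K] B) :
    ∑ i, bA i ⊗ₜ TensorProduct.equivFinsuppOfBasisLeft bA z i = z := by
  conv_rhs => rw [← (TensorProduct.equivFinsuppOfBasisLeft bA).symm_apply_apply z]
  rw [TensorProduct.equivFinsuppOfBasisLeft_symm_apply, Finsupp.sum_fintype _ _ (by simp)]

theorem equivFinsuppOfBasisLeft_one_tmul_mul {ι : Type*} [DecidableEq ι]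
    (bA : Basis ι K A) (b : B) (z : A ⊗[K] B) (i : ι) :
    TensorProduct.equivFinsuppOfBasisLeft bA ((1 ⊗ₜ b) * z) i =
      b * TensorProduct.equivFinsuppOfBasisLeft bA z i := by
  induction z using TensorProduct.induction_on with
  | zero => simp
  | tmul a b' =>
    rw [Algebra.TensorProduct.tmul_mul_tmul, one_mul,
      TensorProduct.equivFinsuppOfBasisLeft_apply_tmul_apply,
      TensorProduct.equivFinsuppOfBasisLeft_apply_tmul_apply, mul_smul_comm]
  | add z₁ z₂ h₁ h₂ => simp only [mul_add, map_add, Finsupp.add_apply, h₁, h₂]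

theorem sum_basis_coord_tmul {ι : Type*} [Fintype ι] {W : Type u} [AddCommGroup W] [Module K W]
    (c : Basis ι K W) (y : A ⊗[K] W) :
    ∑ k, (Algebra.TensorProduct.basis A c).coord k y ⊗ₜ c k = y := by
  conv_rhs => rw [← (Algebra.TensorProduct.basis A c).sum_repr y]
  simp only [Basis.coord_apply, Algebra.TensorProduct.basis_repr_symm_apply']

variable (K A B) in
noncomputable def tensorOpEquiv : A ⊗[K] B ≃ₗ[K] Aᵐᵒᵖ ⊗[K] Bᵐᵒᵖ :=
  (MulOpposite.opLinearEquiv K).trans (Algebra.TensorProduct.opAlgEquiv K K A B).symm.toLinearEquiv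

theorem tensorOpEquiv_opAlgEquiv_smul (y : Aᵐᵒᵖ ⊗[K] Bᵐᵒᵖ) (z : A ⊗[K] B) :
    tensorOpEquiv K A B (Algebra.TensorProduct.opAlgEquiv K K A B y • z) =
      y * tensorOpEquiv K A B z := by
  simp [tensorOpEquiv, MulOpposite.smul_eq_mul_unop]

end Algebra

section TensorDual

variable {K : Type u} [Field K]
variable {A : Type u} [Ring A] [Algebra K A] {B : Type u} [Ring B] [Algebra K B]
variable {M : Type u} [AddCommGroup M] [Module K M] [Module A M] [IsScalarTower K A M]
variable {N : Type u} [AddCommGroup N] [Module K N] [Module B N] [IsScalarTower K B N]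

theorem tensorModule_tmul_smul_tmul (a : A) (b : B) (m : M) (n : N) :
    (a ⊗ₜ[K] b) • (m ⊗ₜ[K] n) = (a • m) ⊗ₜ[K] (b • n) := by
  change a • (m ⊗ₜ[K] (b • n)) = _
  rw [TensorProduct.smul_tmul']

theorem tensorModule_linearMap_ext {P : Type u} [AddCommGroup P] [Module (A ⊗[K] B) P]
    {φ ψ : M ⊗[K] N →ₗ[A ⊗[K] B] P} (h : ∀ m n, φ (m ⊗ₜ n) = ψ (m ⊗ₜ n)) : φ = ψ := by
  ext t
  induction t using TensorProduct.induction_on with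
  | zero => simp only [map_zero]
  | tmul m n => exact h m n
  | add t₁ t₂ h₁ h₂ => rw [map_add, map_add, h₁, h₂]

noncomputable def dualTmul (f : M →ₗ[A] A) (g : N →ₗ[B] B) :
    M ⊗[K] N →ₗ[A ⊗[K] B] A ⊗[K] B where
  toFun := TensorProduct.map (f.restrictScalars K) (g.restrictScalars K)
  map_add' := map_add _
  map_smul' x t := by
    rw [RingHom.id_apply]
    induction x using TensorProduct.induction_on with
    | zero => simp only [zero_smul, map_zero]
    | tmul a b =>
      induction t using TensorProduct.induction_on with
      | zero => simp only [smul_zero, map_zero]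
      | tmul m n => simp [tensorModule_tmul_smul_tmul, Algebra.TensorProduct.tmul_mul_tmul]
      | add t₁ t₂ h₁ h₂ => rw [smul_add, map_add, map_add, h₁, h₂, smul_add]
    | add x₁ x₂ h₁ h₂ => rw [add_smul, map_add, h₁, h₂, add_smul]

@[simp]
theorem dualTmul_tmul (f : M →ₗ[A] A) (g : N →ₗ[B] B) (m : M) (n : N) :
    dualTmul f g (m ⊗ₜ[K] n) = f m ⊗ₜ g n := rfl

noncomputable def tensorDualDistrib :
    (M →ₗ[A] A) ⊗[K] (N →ₗ[B] B) →ₗ[K] (M ⊗[K] N →ₗ[A ⊗[K] B] A ⊗[K] B) :=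
  TensorProduct.lift <| LinearMap.mk₂ K dualTmul
    (fun _ _ _ => tensorModule_linearMap_ext fun _ _ => TensorProduct.add_tmul ..)
    (fun _ _ _ => tensorModule_linearMap_ext fun _ _ => (TensorProduct.smul_tmul' ..).symm)
    (fun _ _ _ => tensorModule_linearMap_ext fun _ _ => TensorProduct.tmul_add ..)
    (fun _ _ _ => tensorModule_linearMap_ext fun _ _ => TensorProduct.tmul_smul ..)

@[simp]
theorem tensorDualDistrib_tmul (f : M →ₗ[A] A) (g : N →ₗ[B] B) :
    tensorDualDistrib (f ⊗ₜ[K] g) = dualTmul f g := rfl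

theorem coe_tensorDualDistrib (x : (M →ₗ[A] A) ⊗[K] (N →ₗ[B] B)) :
    ⇑(tensorDualDistrib x) = homTensorHomMap (.id K) M N A B
      (TensorProduct.map (restrictScalarsₗ K A M A K) (restrictScalarsₗ K B N B K) x) := by
  induction x using TensorProduct.induction_on with
  | zero => simp only [map_zero]; rfl
  | tmul f g => rfl
  | add x y hx hy =>
    funext t
    rw [map_add, map_add, map_add, LinearMap.add_apply, LinearMap.add_apply, congrFun hx t,
      congrFun hy t]

theorem tensorDualDistrib_injective [Module.Finite K M] [Module.Finite K N] :
    Function.Injective (tensorDualDistrib (K := K) (A := A) (B := B) (M := M) (N := N)) := by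
  intro x y h
  have h' := congrArg DFunLike.coe h
  rw [coe_tensorDualDistrib, coe_tensorDualDistrib, ← homTensorHomEquiv_apply,
    ← homTensorHomEquiv_apply] at h'
  exact TensorProduct.map_injective_of_flat_flat _ _ (restrictScalars_injective K)
    (restrictScalars_injective K)
    ((homTensorHomEquiv K M N A B).injective (DFunLike.coe_injective h'))

theorem tensorDualDistrib_smul (y : Aᵐᵒᵖ ⊗[K] Bᵐᵒᵖ) (x : (M →ₗ[A] A) ⊗[K] (N →ₗ[B] B)) :
    tensorDualDistrib (y • x) =
      Algebra.TensorProduct.opAlgEquiv K K A B y • tensorDualDistrib x := by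
  induction y using TensorProduct.induction_on with
  | zero => rw [zero_smul (Aᵐᵒᵖ ⊗[K] Bᵐᵒᵖ) x, map_zero, map_zero, zero_smul]
  | tmul a b =>
    induction x using TensorProduct.induction_on with
    | zero => rw [smul_zero, map_zero, smul_zero]
    | tmul f g =>
      refine tensorModule_linearMap_ext fun m n => ?_
      simp [tensorModule_tmul_smul_tmul, MulOpposite.smul_eq_mul_unop,
        Algebra.TensorProduct.tmul_mul_tmul]
    | add x₁ x₂ h₁ h₂ => rw [smul_add, map_add, map_add, smul_add, h₁, h₂]
  | add y₁ y₂ h₁ h₂ => rw [add_smul, map_add, map_add, add_smul, h₁, h₂]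

variable (K A N) in
noncomputable def lTensorDualToHom : A ⊗[K] (N →ₗ[B] B) →ₗ[K] N →ₗ[K] A ⊗[K] B :=
  lTensorHomToHomLTensor (.id K) N A B ∘ₗ (restrictScalarsₗ K B N B K).lTensor A

@[simp]
theorem lTensorDualToHom_tmul_apply (a : A) (g : N →ₗ[B] B) (n : N) :
    lTensorDualToHom K A N (a ⊗ₜ g) n = a ⊗ₜ g n := rfl

theorem lTensorDualToHom_injective [Module.Finite K N] :
    Function.Injective (lTensorDualToHom K A N (B := B)) := by
  rw [lTensorDualToHom, LinearMap.coe_comp, ← lTensorHomEquivHomLTensor_toLinearMap,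
    LinearEquiv.coe_toLinearMap]
  exact (lTensorHomEquivHomLTensor K N A B).injective.comp
    (Module.Flat.lTensor_preserves_injective_linearMap _ (restrictScalars_injective K))

theorem lTensorDualToHom_smul_apply (a : A) (y : A ⊗[K] (N →ₗ[B] B)) (n : N) :
    lTensorDualToHom K A N (a • y) n = (a ⊗ₜ 1) * lTensorDualToHom K A N y n := by
  induction y using TensorProduct.induction_on with
  | zero => simp
  | tmul a' g => simp [TensorProduct.smul_tmul', Algebra.TensorProduct.tmul_mul_tmul]
  | add y₁ y₂ h₁ h₂ => simp only [smul_add, map_add, LinearMap.add_apply, h₁, h₂, mul_add]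

section Expansion

variable {ι : Type*} [DecidableEq ι] (bA : Basis ι K A)
variable (φ : M ⊗[K] N →ₗ[A ⊗[K] B] A ⊗[K] B)

noncomputable def dualCoord (m : M) (i : ι) : N →ₗ[B] B where
  toFun n := TensorProduct.equivFinsuppOfBasisLeft bA (φ (m ⊗ₜ n)) i
  map_add' n n' := by rw [TensorProduct.tmul_add, map_add, map_add, Finsupp.add_apply]
  map_smul' b n := by
    rw [RingHom.id_apply, smul_eq_mul, ← equivFinsuppOfBasisLeft_one_tmul_mul, ← smul_eq_mul,
      ← LinearMap.map_smul, tensorModule_tmul_smul_tmul, one_smul]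

theorem lTensorDualToHom_sum_dualCoord [Fintype ι] (m : M) (n : N) :
    lTensorDualToHom K A N (∑ i, bA i ⊗ₜ dualCoord bA φ m i) n = φ (m ⊗ₜ n) := by
  simp only [map_sum, LinearMap.sum_apply, lTensorDualToHom_tmul_apply]
  exact sum_tmul_equivFinsuppOfBasisLeft bA _

-- Linearity is checked after the injective map `lTensorDualToHom`, where it is that of `φ`.
noncomputable def dualLeftExpansion [Fintype ι] [Module.Finite K N] :
    M →ₗ[A] A ⊗[K] (N →ₗ[B] B) where
  toFun m := ∑ i, bA i ⊗ₜ dualCoord bA φ m i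
  map_add' m m' := lTensorDualToHom_injective <| LinearMap.ext fun n => by
    simp only [map_add, LinearMap.add_apply, lTensorDualToHom_sum_dualCoord,
      TensorProduct.add_tmul]
  map_smul' a m := lTensorDualToHom_injective <| LinearMap.ext fun n => by
    rw [RingHom.id_apply, lTensorDualToHom_smul_apply, lTensorDualToHom_sum_dualCoord,
      lTensorDualToHom_sum_dualCoord, ← smul_eq_mul, ← LinearMap.map_smul,
      tensorModule_tmul_smul_tmul, one_smul]

theorem lTensorDualToHom_dualLeftExpansion [Fintype ι] [Module.Finite K N] (m : M) (n : N) :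
    lTensorDualToHom K A N (dualLeftExpansion bA φ m) n = φ (m ⊗ₜ n) :=
  lTensorDualToHom_sum_dualCoord bA φ m n

end Expansion

theorem tensorDualDistrib_surjective [Module.Finite K A] [Module.Finite K B] [Module.Finite K N] :
    Function.Surjective (tensorDualDistrib (K := K) (A := A) (B := B) (M := M) (N := N)) := by
  intro φ
  let c := Module.finBasis K (N →ₗ[B] B)
  let Γ := dualLeftExpansion (Module.finBasis K A) φ
  refine ⟨∑ k, ((Algebra.TensorProduct.basis A c).coord k ∘ₗ Γ) ⊗ₜ c k,
    tensorModule_linearMap_ext fun m n => ?_⟩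
  calc tensorDualDistrib (∑ k, ((Algebra.TensorProduct.basis A c).coord k ∘ₗ Γ) ⊗ₜ c k) (m ⊗ₜ n)
      = lTensorDualToHom K A N (∑ k, (Algebra.TensorProduct.basis A c).coord k (Γ m) ⊗ₜ c k) n := by
        simp
    _ = φ (m ⊗ₜ n) := by rw [sum_basis_coord_tmul, lTensorDualToHom_dualLeftExpansion]

end TensorDual

section DoubleDual

variable {K : Type u} [Field K]
variable {A : Type u} [Ring A] [Algebra K A] {B : Type u} [Ring B] [Algebra K B]
variable {M : Type u} [AddCommGroup M] [Module K M] [Module A M] [IsScalarTower K A M]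
variable {N : Type u} [AddCommGroup N] [Module K N] [Module B N] [IsScalarTower K B N]

noncomputable def tensorDualDistribTranspose
    (χ : (M ⊗[K] N →ₗ[A ⊗[K] B] A ⊗[K] B) →ₗ[(A ⊗[K] B)ᵐᵒᵖ] A ⊗[K] B) :
    (M →ₗ[A] A) ⊗[K] (N →ₗ[B] B) →ₗ[Aᵐᵒᵖ ⊗[K] Bᵐᵒᵖ] Aᵐᵒᵖ ⊗[K] Bᵐᵒᵖ where
  toFun u := tensorOpEquiv K A B (χ (tensorDualDistrib u))
  map_add' u u' := by rw [map_add, map_add, map_add]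
  map_smul' y u := by
    rw [tensorDualDistrib_smul, map_smul, tensorOpEquiv_opAlgEquiv_smul]
    rfl

theorem tensorDualDistribTranspose_apply
    (χ : (M ⊗[K] N →ₗ[A ⊗[K] B] A ⊗[K] B) →ₗ[(A ⊗[K] B)ᵐᵒᵖ] A ⊗[K] B)
    (u : (M →ₗ[A] A) ⊗[K] (N →ₗ[B] B)) :
    tensorDualDistribTranspose χ u = tensorOpEquiv K A B (χ (tensorDualDistrib u)) := rfl

theorem tensorDualDistribTranspose_injective [Module.Finite K A] [Module.Finite K B]
    [Module.Finite K N] :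
    Function.Injective
      (tensorDualDistribTranspose (K := K) (A := A) (B := B) (M := M) (N := N)) := by
  intro χ χ' h
  ext φ
  obtain ⟨u, rfl⟩ := tensorDualDistrib_surjective φ
  exact (tensorOpEquiv K A B).injective (LinearMap.congr_fun h u)

-- `dualEval` with `M**` read as the dual of the `Aᵐᵒᵖ`-module `M*`, the form `tensorDualDistrib`
-- applies to.
variable (K A M) in
noncomputable def opDualEval : M →ₗ[K] (M →ₗ[A] A) →ₗ[Aᵐᵒᵖ] Aᵐᵒᵖ where
  toFun m := (MulOpposite.opLinearEquiv Aᵐᵒᵖ).toLinearMap ∘ₗ dualEval A M m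
  map_add' m m' := by rw [map_add, LinearMap.comp_add]
  map_smul' k m := by
    ext f
    exact congrArg MulOpposite.op (f.map_smul_of_tower k m)

variable (K) in
theorem opDualEval_bijective (h : Function.Bijective (dualEval A M)) :
    Function.Bijective (opDualEval K A M) :=
  (LinearEquiv.arrowCongrAddEquiv (.refl _ _) (MulOpposite.opLinearEquiv Aᵐᵒᵖ)).bijective.comp h

theorem tensorDualDistribTranspose_dualEval (t : M ⊗[K] N) :
    tensorDualDistribTranspose (dualEval (A ⊗[K] B) (M ⊗[K] N) t) =
      tensorDualDistrib (TensorProduct.map (opDualEval K A M) (opDualEval K B N) t) := by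
  refine tensorModule_linearMap_ext fun f g => ?_
  induction t using TensorProduct.induction_on with
  | zero => simp [tensorDualDistribTranspose_apply]
  | tmul m n => rfl
  | add t₁ t₂ h₁ h₂ =>
    rw [tensorDualDistribTranspose_apply, map_add, LinearMap.add_apply, map_add,
      ← tensorDualDistribTranspose_apply, ← tensorDualDistribTranspose_apply, h₁, h₂, map_add,
      map_add, LinearMap.add_apply]

end DoubleDual

theorem tensor_reflexive_general
    (K : Type u) [Field K]
    (A : Type u) [Ring A] [Algebra K A] [FiniteDimensional K A]
    (B : Type u) [Ring B] [Algebra K B] [FiniteDimensional K B]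
    (M : Type u) [AddCommGroup M] [Module K M] [Module A M] [IsScalarTower K A M]
    [Module.Finite A M]
    (N : Type u) [AddCommGroup N] [Module K N] [Module B N] [IsScalarTower K B N]
    [Module.Finite B N]
    (hM : Function.Bijective (dualEval A M)) (hN : Function.Bijective (dualEval B N)) :
    let _i : Module (A ⊗[K] B) (M ⊗[K] N) := tensorModule K A B M N
    Function.Bijective (dualEval (A ⊗[K] B) (M ⊗[K] N)) := by
  intro _i
  have : Module.Finite K M := Module.Finite.trans (R := K) A M
  have : Module.Finite K N := Module.Finite.trans (R := K) B N
  have hω := (TensorProduct.congr (.ofBijective _ (opDualEval_bijective K hM))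
    (.ofBijective _ (opDualEval_bijective K hN))).bijective
  refine Function.Bijective.of_comp_left ?_ tensorDualDistribTranspose_injective
  rw [show tensorDualDistribTranspose ∘ _ = _ from funext tensorDualDistribTranspose_dualEval]
  exact ⟨tensorDualDistrib_injective.comp hω.1, tensorDualDistrib_surjective.comp hω.2⟩

/-- **Step (3) of the proof of Proposition 3.1.** If `M ∈ mod A` and `N ∈ mod B` are
reflexive (the evaluation maps `M → M**` and `N → N**` are isomorphisms), then
`M ⊗[K] N` is a reflexive `A ⊗[K] B`-module. -/
theorem tensor_reflexive
    (K : Type u) [Field K] [IsAlgClosed K]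
    (A : Type u) [Ring A] [Algebra K A] [FiniteDimensional K A]
    (B : Type u) [Ring B] [Algebra K B] [FiniteDimensional K B]
    (M : Type u) [AddCommGroup M] [Module K M] [Module A M] [IsScalarTower K A M]
    [Module.Finite A M]
    (N : Type u) [AddCommGroup N] [Module K N] [Module B N] [IsScalarTower K B N]
    [Module.Finite B N]
    (hM : Function.Bijective (dualEval A M)) (hN : Function.Bijective (dualEval B N)) :
    let _i : Module (A ⊗[K] B) (M ⊗[K] N) := tensorModule K A B M N
    Function.Bijective (dualEval (A ⊗[K] B) (M ⊗[K] N)) :=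
  tensor_reflexive_general K A B M N hM hN
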